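/- Fix an integer D ≥ 3. Let Σ_ε ∈ ℝ^{d_y×d_y} and Σ_x ∈ ℝ^{d_x×d_x} be symmetric positive definite, V ∈ ℝ^{d_y×d_x}, and set V' = Σ_ε^{1/2} V Σ_x^{1/2} with singular value decomposition V' = L S Rᵀ, where S ∈ ℝ^{d×d} is diagonal with nonnegative entries, L ∈ ℝ^{d_y×d}, R ∈ ℝ^{d_x×d} satisfy LᵀL = RᵀR = I_d, and Tr S > 0. Let U_1,…,U_{D−1} be matrices of appropriate sizes with U_iᵀU_i = I_d, and define the weights W_D = Σ_ε^{−1/2} L Σ_D U_{D−1}ᵀ, W_i = U_i Σ_i U_{i−1}ᵀ for i = 2,…,D−1, and W_1 = U_1 Σ_1 Rᵀ Σ_x^{−1/2}, where Σ_1 = (Tr S)^{−(D−2)/(2D)} (Tr Σ_x)^{(D−1)/(2D)} (Tr Σ_ε)^{−1/(2D)} S^{1/2}, Σ_D = (Tr S)^{−(D−2)/(2D)} (Tr Σ_ε)^{(D−1)/(2D)} (Tr Σ_x)^{−1/(2D)} S^{1/2}, and Σ_i = (Tr S)^{1/D} (Tr Σ_ε · Tr Σ_x)^{−1/(2D)}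 I_d for 2 ≤ i ≤ D−1. Then the sharpness T = Σ_{k=1}^D Tr[A_kᵀA_k]·Tr[B_k Σ_x B_kᵀ] (with A_k = W_D⋯W_{k+1}, A_D = I, B_k = W_{k−1}⋯W_1, B_1 = I) equals (D−1)·(Tr S)^{(D−2)/D}·(Tr Σ_ε · Tr Σ_x)^{1/D}·Tr[Σ_ε^{−1} L S Lᵀ] + d_y·(Tr S)^{2(D−1)/D}·(Tr Σ_x)^{1/D}/(Tr Σ_ε)^{(D−1)/D}. -/

import Mathlib

/-!
The weights are aligned: consecutive layers share the semi-orthogonal factors `U_i`, and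
`U_iᵀ U_i = I` collapses every partial product to a multiple of a single factor. With `α`, `β`, `γ`
the scales of the first, last and middle layers,
`W_k ⋯ W_1 = α γ^(k-1) • U_k S^{1/2} Rᵀ Σ_x^{-1/2}` and
`(W_D ⋯ W_{k+1})ᵀ (W_D ⋯ W_{k+1}) = γ^(2(D-1-k)) • U_k Nᵀ N U_kᵀ`, `N = Σ_ε^{-1/2} L (β • S^{1/2})`.
Under the trace, `Σ_x^{-1/2}` whitens `Σ_x` and `Σ_ε^{-1/2}` turns into `Σ_ε⁻¹`, so each term of `T`
is a monomial in `Tr S`, `Tr Σ_x`, `Tr Σ_ε` times `Tr[Σ_ε⁻¹ L S Lᵀ]` or `d_y = Tr I`, and the layer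
scales make the `D - 1` terms of the first kind coincide.
-/

open Matrix Finset

/-- The product `W_{i+l-1} ⋯ W_i` of a chain of matrices with dimensions `d`. -/
def mulChain (d : ℕ → ℕ) (W : ∀ k, Matrix (Fin (d (k + 1))) (Fin (d k)) ℝ) (i : ℕ) :
    (l : ℕ) → Matrix (Fin (d (i + l))) (Fin (d i)) ℝ
  | 0 => (1 : Matrix (Fin (d i)) (Fin (d i)) ℝ)
  | l + 1 => W (i + l) * mulChain d W i l

/-- The product `W_{l-1} ⋯ W_0` of the first `l` matrices of a chain. -/
def prodUpTo (d : ℕ → ℕ) (W : ∀ k, Matrix (Fin (d (k + 1))) (Fin (d k)) ℝ) :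
    (l : ℕ) → Matrix (Fin (d l)) (Fin (d 0)) ℝ
  | 0 => 1
  | l + 1 => W l * prodUpTo d W l

/-- The sharpness `T = Σ_{k=1}^D Tr[A_kᵀA_k]·Tr[B_k Sx B_kᵀ]` of a `D`-layer deep
linear network (`A_k = W_D⋯W_{k+1}`, `A_D = I`; `B_k = W_{k−1}⋯W_1`, `B_1 = I`);
indices are 0-based here: the paper's `W_k` is `W (k-1)`. -/
noncomputable def sharpnessT (d : ℕ → ℕ) (W : ∀ k, Matrix (Fin (d (k + 1))) (Fin (d k)) ℝ)
    (Sx : Matrix (Fin (d 0)) (Fin (d 0)) ℝ) (D : ℕ) : ℝ :=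
  ∑ k ∈ Finset.range D,
    ((mulChain d W (k + 1) (D - (k + 1)))ᵀ * mulChain d W (k + 1) (D - (k + 1))).trace *
      (prodUpTo d W k * Sx * (prodUpTo d W k)ᵀ).trace

/-- The positive semidefinite square root of a positive semidefinite matrix (the definition
`Matrix.PosSemidef.sqrt` of the older Mathlib, removed since). -/
noncomputable def Matrix.PosSemidef.sqrt {n : Type*} [Fintype n] [DecidableEq n] 
    {A : Matrix n n ℝ} (hA : A.PosSemidef) : Matrix n n ℝ :=
  (hA.1.eigenvectorUnitary : Matrix n n ℝ) * diagonal (Real.sqrt ∘ hA.1.eigenvalues) *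
    (star hA.1.eigenvectorUnitary : Matrix n n ℝ)

/-- The entrywise square root of a (diagonal, entrywise nonnegative) matrix. -/
noncomputable def entrywiseSqrt {m : ℕ} (S : Matrix (Fin m) (Fin m) ℝ) :
    Matrix (Fin m) (Fin m) ℝ :=
  Matrix.of fun i j => Real.sqrt (S i j)

theorem Matrix.trace_mul_mul_transpose_of_transpose_mul_self_eq_one {m n : Type*} [Fintype m]
    [Fintype n] [DecidableEq n] {U : Matrix m n ℝ} (hU : Uᵀ * U = 1) (G : Matrix n n ℝ) :
    (U * G * Uᵀ).trace = G.trace := by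
  rw [trace_mul_cycle, hU, Matrix.one_mul]

theorem Matrix.transpose_submatrix_cast_mul_self {a b n : ℕ} {R : Type*} [Semiring R] (h : a = b)
    (M : Matrix (Fin b) (Fin n) R) :
    (M.submatrix (Fin.cast h) id)ᵀ * M.submatrix (Fin.cast h) id = Mᵀ * M := by
  subst h; rfl

theorem entrywiseSqrt_mul_transpose_self {m : ℕ} {S : Matrix (Fin m) (Fin m) ℝ} (hS : S.IsDiag)
    (hS₀ : ∀ i, 0 ≤ S i i) : entrywiseSqrt S * (entrywiseSqrt S)ᵀ = S := by
  have hP : entrywiseSqrt S = diagonal fun i => √(S i i) := by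
    ext i j
    rcases eq_or_ne i j with rfl | h
    · simp [entrywiseSqrt]
    · simp [entrywiseSqrt, hS h, h]
  rw [hP, diagonal_transpose, diagonal_mul_diagonal]
  simp only [Real.mul_self_sqrt (hS₀ _)]
  exact hS.diagonal_diag

namespace Matrix.PosSemidef

variable {m n : Type*} [Fintype m] [Fintype n] [DecidableEq n] {A : Matrix n n ℝ}

theorem sqrt_mul_self (hA : A.PosSemidef) : hA.sqrt * hA.sqrt = A := by
  have hU : (star hA.1.eigenvectorUnitary : Matrix n n ℝ) * hA.1.eigenvectorUnitary = 1 :=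
    Unitary.coe_star_mul_self _
  calc hA.sqrt * hA.sqrt
      = (hA.1.eigenvectorUnitary : Matrix n n ℝ) * (diagonal (Real.sqrt ∘ hA.1.eigenvalues)
          * ((star hA.1.eigenvectorUnitary : Matrix n n ℝ) * hA.1.eigenvectorUnitary)
          * diagonal (Real.sqrt ∘ hA.1.eigenvalues))
          * (star hA.1.eigenvectorUnitary : Matrix n n ℝ) := by
        simp only [sqrt, Matrix.mul_assoc]
    _ = A := by
        rw [hU, Matrix.mul_one, diagonal_mul_diagonal]
        conv_rhs => rw [hA.1.spectral_theorem, Unitary.conjStarAlgAut_apply]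
        congr 2
        ext i j
        simp [diagonal_apply, Real.mul_self_sqrt (hA.eigenvalues_nonneg i)]

theorem transpose_sqrt (hA : A.PosSemidef) : hA.sqrtᵀ = hA.sqrt := by
  rw [sqrt, star_eq_conjTranspose, conjTranspose_eq_transpose_of_trivial, transpose_mul,
    transpose_mul, transpose_transpose, diagonal_transpose, Matrix.mul_assoc]

theorem inv_sqrt_mul_inv_sqrt (hA : A.PosSemidef) : hA.sqrt⁻¹ * hA.sqrt⁻¹ = A⁻¹ := by
  rw [← mul_inv_rev, sqrt_mul_self]

theorem trace_transpose_mul_self_inv_sqrt_mul_mul_smul (hA : A.PosSemidef) (L : Matrix n m ℝ)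
    {P S : Matrix m m ℝ} (hP : P * Pᵀ = S) (c : ℝ) :
    ((hA.sqrt⁻¹ * L * (c • P))ᵀ * (hA.sqrt⁻¹ * L * (c • P))).trace
      = c ^ 2 * (A⁻¹ * (L * S * Lᵀ)).trace := by
  calc ((hA.sqrt⁻¹ * L * (c • P))ᵀ * (hA.sqrt⁻¹ * L * (c • P))).trace
      = (hA.sqrt⁻¹ * (L * ((c • P) * (c • P)ᵀ) * Lᵀ) * hA.sqrt⁻¹).trace := by
        rw [trace_mul_comm]
        simp only [transpose_mul, transpose_nonsing_inv, hA.transpose_sqrt, Matrix.mul_assoc]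
    _ = c ^ 2 * (A⁻¹ * (L * S * Lᵀ)).trace := by
        rw [trace_mul_cycle, hA.inv_sqrt_mul_inv_sqrt, transpose_smul, ← hP]
        simp only [Matrix.smul_mul, Matrix.mul_smul, smul_smul, trace_smul, smul_eq_mul, sq]

end Matrix.PosSemidef

theorem Matrix.PosDef.mul_inv_sqrt_mul_self_mul_transpose {m n : Type*} [Fintype m] [Fintype n]
    [DecidableEq n] {A : Matrix n n ℝ} (hA : A.PosDef) (B : Matrix m n ℝ) :
    B * hA.posSemidef.sqrt⁻¹ * A * (B * hA.posSemidef.sqrt⁻¹)ᵀ = B * Bᵀ := by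
  set Q := hA.posSemidef.sqrt
  have hQ : Q * Q = A := hA.posSemidef.sqrt_mul_self
  have hQt : Qᵀ = Q := hA.posSemidef.transpose_sqrt
  have hdet : IsUnit Q.det := by
    refine isUnit_iff_ne_zero.mpr fun h => hA.det_pos.ne' ?_
    rw [← hQ, det_mul, h, zero_mul]
  calc B * Q⁻¹ * A * (B * Q⁻¹)ᵀ = B * ((Q⁻¹ * Q) * (Q * Q⁻¹)) * Bᵀ := by
        rw [← hQ, transpose_mul, transpose_nonsing_inv, hQt]
        simp only [Matrix.mul_assoc]
    _ = B * Bᵀ := by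
        rw [nonsing_inv_mul _ hdet, mul_nonsing_inv _ hdet, Matrix.one_mul, Matrix.mul_one]

section AlignedChain

variable {d : ℕ → ℕ} {dd : ℕ} {W : ∀ k, Matrix (Fin (d (k + 1))) (Fin (d k)) ℝ}
  {U : ∀ i, Matrix (Fin (d i)) (Fin dd) ℝ} {γ : ℝ}

theorem transpose_mul_mulChain {i l : ℕ}
    (hW : ∀ j, i ≤ j → j < i + l → W j = γ • (U (j + 1) * (U j)ᵀ))
    (hU : ∀ j, i < j → j ≤ i + l → (U j)ᵀ * U j = 1) :
    (U (i + l))ᵀ * mulChain d W i l = γ ^ l • (U i)ᵀ := by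
  induction l with
  | zero => simp [mulChain]
  | succ l ih =>
    calc (U (i + l + 1))ᵀ * (W (i + l) * mulChain d W i l)
        = γ • ((U (i + l + 1))ᵀ * U (i + l + 1) * ((U (i + l))ᵀ * mulChain d W i l)) := by
          rw [hW _ (by omega) (by omega)]
          simp only [Matrix.mul_smul, Matrix.smul_mul, Matrix.mul_assoc]
      _ = γ ^ (l + 1) • (U i)ᵀ := by
          rw [hU (i + l + 1) (by omega) (by omega), Matrix.one_mul,
            ih (fun j h1 _ => hW j h1 (by omega)) (fun j h1 _ => hU j h1 (by omega)),
            smul_smul, pow_succ']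

theorem prodUpTo_succ_eq_smul {α : ℝ} {M : Matrix (Fin dd) (Fin (d 0)) ℝ} {k : ℕ}
    (hW0 : W 0 = α • (U 1 * M))
    (hW : ∀ j, 1 ≤ j → j ≤ k → W j = γ • (U (j + 1) * (U j)ᵀ))
    (hU : ∀ j, 1 ≤ j → j ≤ k → (U j)ᵀ * U j = 1) :
    prodUpTo d W (k + 1) = (α * γ ^ k) • (U (k + 1) * M) := by
  induction k with
  | zero => simp [prodUpTo, hW0]
  | succ k ih =>
    calc W (k + 1) * prodUpTo d W (k + 1)
        = (α * γ ^ k * γ) • (U (k + 2) * ((U (k + 1))ᵀ * (U (k + 1) * M))) := by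
          rw [hW _ (by omega) le_rfl,
            ih (fun j h1 _ => hW j h1 (by omega)) (fun j h1 _ => hU j h1 (by omega))]
          simp only [Matrix.mul_smul, Matrix.smul_mul, Matrix.mul_assoc, smul_smul]
      _ = (α * γ ^ (k + 1)) • (U (k + 2) * M) := by
          rw [← Matrix.mul_assoc (U (k + 1))ᵀ, hU _ (by omega) le_rfl, Matrix.one_mul, mul_assoc,
            ← pow_succ]

/- The last layer enters only through its Gram matrix `(W j)ᵀ * W j`, which does not see the row
dimension `d (j + 1)`; this avoids casting along `j + 1 = D`. -/
theorem trace_transpose_mul_self_mulChain {D i : ℕ} (hi : i < D) {G : Matrix (Fin dd) (Fin dd) ℝ}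
    (hTop : ∀ j, j + 1 = D → (W j)ᵀ * W j = U j * G * (U j)ᵀ)
    (hW : ∀ j, i ≤ j → j + 1 < D → W j = γ • (U (j + 1) * (U j)ᵀ))
    (hU : ∀ j, i ≤ j → j < D → (U j)ᵀ * U j = 1) :
    ((mulChain d W i (D - i))ᵀ * mulChain d W i (D - i)).trace
      = γ ^ (2 * (D - 1 - i)) * G.trace := by
  obtain ⟨m, hm⟩ : ∃ m, D - i = m + 1 := ⟨D - 1 - i, by omega⟩
  rw [hm, show D - 1 - i = m by omega]
  have hC : (U (i + m))ᵀ * mulChain d W i m = γ ^ m • (U i)ᵀ :=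
    transpose_mul_mulChain (fun j h1 _ => hW j h1 (by omega))
      (fun j h1 h2 => hU j (by omega) (by omega))
  calc ((W (i + m) * mulChain d W i m)ᵀ * (W (i + m) * mulChain d W i m)).trace
      = (((U (i + m))ᵀ * mulChain d W i m)ᵀ * G * ((U (i + m))ᵀ * mulChain d W i m)).trace := by
        rw [transpose_mul, Matrix.mul_assoc, ← Matrix.mul_assoc (W (i + m))ᵀ, hTop _ (by omega)]
        simp only [transpose_mul, transpose_transpose, Matrix.mul_assoc]
    _ = γ ^ (2 * m) * G.trace := by
        rw [hC, transpose_smul, transpose_transpose, Matrix.smul_mul, Matrix.smul_mul,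
          Matrix.mul_smul, smul_smul, trace_smul,
          trace_mul_mul_transpose_of_transpose_mul_self_eq_one (hU i le_rfl hi), smul_eq_mul,
          pow_mul', sq]

theorem sharpnessT_eq_of_aligned {D : ℕ} (hD : 2 ≤ D) (Sx : Matrix (Fin (d 0)) (Fin (d 0)) ℝ)
    {α : ℝ} {M : Matrix (Fin dd) (Fin (d 0)) ℝ} {G : Matrix (Fin dd) (Fin dd) ℝ}
    (hW0 : W 0 = α • (U 1 * M))
    (hW : ∀ j, 1 ≤ j → j + 1 < D → W j = γ • (U (j + 1) * (U j)ᵀ))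
    (hTop : ∀ j, j + 1 = D → (W j)ᵀ * W j = U j * G * (U j)ᵀ)
    (hU : ∀ j, 1 ≤ j → j < D → (U j)ᵀ * U j = 1) :
    sharpnessT d W Sx D
      = γ ^ (2 * (D - 2)) * G.trace * Sx.trace
        + (D - 2 : ℕ) * (α ^ 2 * γ ^ (2 * (D - 3)) * G.trace * (M * Sx * Mᵀ).trace)
        + d D * (α ^ 2 * γ ^ (2 * (D - 2)) * (M * Sx * Mᵀ).trace) := by
  have hA : ∀ i, 1 ≤ i → i < D →
      ((mulChain d W i (D - i))ᵀ * mulChain d W i (D - i)).trace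
        = γ ^ (2 * (D - 1 - i)) * G.trace := fun i h1 h2 =>
    trace_transpose_mul_self_mulChain h2 hTop (fun j _ h => hW j (by omega) h)
      (fun j _ h => hU j (by omega) h)
  have hB : ∀ k, k + 1 < D → (prodUpTo d W (k + 1) * Sx * (prodUpTo d W (k + 1))ᵀ).trace
      = (α * γ ^ k) ^ 2 * (M * Sx * Mᵀ).trace := by
    intro k hk
    have hconj : U (k + 1) * M * Sx * (U (k + 1) * M)ᵀ
        = U (k + 1) * (M * Sx * Mᵀ) * (U (k + 1))ᵀ := by
      simp only [transpose_mul, Matrix.mul_assoc]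
    rw [prodUpTo_succ_eq_smul hW0 (fun j h1 _ => hW j h1 (by omega))
        (fun j h1 _ => hU j h1 (by omega)),
      transpose_smul, Matrix.smul_mul, Matrix.smul_mul, Matrix.mul_smul, smul_smul, trace_smul,
      hconj, trace_mul_mul_transpose_of_transpose_mul_self_eq_one (hU _ le_add_self hk),
      smul_eq_mul, sq]
  obtain ⟨n, rfl⟩ : ∃ n, D = n + 2 := ⟨D - 2, by omega⟩
  have hmiddle : ∀ k ∈ range n,
      ((mulChain d W (k + 2) (n + 2 - (k + 2)))ᵀ * mulChain d W (k + 2) (n + 2 - (k + 2))).trace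
          * (prodUpTo d W (k + 1) * Sx * (prodUpTo d W (k + 1))ᵀ).trace
        = α ^ 2 * γ ^ (2 * (n + 2 - 3)) * G.trace * (M * Sx * Mᵀ).trace := by
    intro k hk
    have hk := mem_range.mp hk
    rw [hA (k + 2) (by omega) (by omega), hB k (by omega),
      show n + 2 - 3 = (n + 2 - 1 - (k + 2)) + k by omega]
    ring
  have hlast : ((mulChain d W (n + 2) (n + 2 - (n + 2)))ᵀ
      * mulChain d W (n + 2) (n + 2 - (n + 2))).trace = d (n + 2) := by
    rw [Nat.sub_self]
    simp [mulChain]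
  unfold sharpnessT
  rw [sum_range_succ, sum_range_succ', sum_congr rfl hmiddle, sum_const, card_range, nsmul_eq_mul,
    hA 1 le_rfl (by omega), hlast, hB n (by omega)]
  simp only [prodUpTo, one_mul, transpose_one, mul_one, Nat.reduceSubDiff, add_tsub_cancel_right]
  ring

end AlignedChain

/-- In the paper's notation `Σ_1 = outerLayerScale D (Tr S) (Tr Σ_x) (Tr Σ_ε) • S^{1/2}`,
`Σ_D = outerLayerScale D (Tr S) (Tr Σ_ε) (Tr Σ_x) • S^{1/2}` and
`Σ_i = innerLayerScale D (Tr S) (Tr Σ_ε) (Tr Σ_x) • I` for `2 ≤ i ≤ D - 1`. -/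
noncomputable def outerLayerScale (D : ℕ) (s u v : ℝ) : ℝ :=
  s ^ (-((D : ℝ) - 2) / (2 * D)) * u ^ (((D : ℝ) - 1) / (2 * D)) * v ^ (-(1 : ℝ) / (2 * D))

noncomputable def innerLayerScale (D : ℕ) (s u v : ℝ) : ℝ :=
  s ^ ((1 : ℝ) / D) * (u * v) ^ (-(1 : ℝ) / (2 * D))

section LayerScale

open Real

variable {D : ℕ} {s u v : ℝ}

theorem sq_layerScales_first (hD : 2 ≤ D) (hs : 0 < s) (hu : 0 < u) (hv : 0 < v) :
    outerLayerScale D s v u ^ 2 * innerLayerScale D s v u ^ (2 * (D - 2)) * u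
      = s ^ (((D : ℝ) - 2) / D) * (v * u) ^ ((1 : ℝ) / D) := by
  rw [← exp_log hs, ← exp_log hu, ← exp_log hv]
  simp only [outerLayerScale, innerLayerScale, ← exp_add, ← exp_mul, ← exp_nat_mul]
  congr 1
  have : (D : ℝ) ≠ 0 := by positivity
  push_cast [Nat.cast_sub hD]
  field_simp
  ring

theorem sq_layerScales_middle (hD : 3 ≤ D) (hs : 0 < s) (hu : 0 < u) (hv : 0 < v) :
    outerLayerScale D s u v ^ 2 * outerLayerScale D s v u ^ 2
        * innerLayerScale D s v u ^ (2 * (D - 3)) * s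
      = s ^ (((D : ℝ) - 2) / D) * (v * u) ^ ((1 : ℝ) / D) := by
  rw [← exp_log hs, ← exp_log hu, ← exp_log hv]
  simp only [outerLayerScale, innerLayerScale, ← exp_add, ← exp_mul, ← exp_nat_mul]
  congr 1
  have : (D : ℝ) ≠ 0 := by positivity
  push_cast [Nat.cast_sub hD]
  field_simp
  ring

theorem sq_layerScales_last (hD : 2 ≤ D) (hs : 0 < s) (hu : 0 < u) (hv : 0 < v) :
    outerLayerScale D s u v ^ 2 * innerLayerScale D s v u ^ (2 * (D - 2)) * s
      = s ^ (2 * ((D : ℝ) - 1) / D) * u ^ ((1 : ℝ) / D) / v ^ (((D : ℝ) - 1) / D) := by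
  rw [← exp_log hs, ← exp_log hu, ← exp_log hv]
  simp only [outerLayerScale, innerLayerScale, ← exp_add, ← exp_mul, ← exp_nat_mul, ← exp_sub]
  congr 1
  have : (D : ℝ) ≠ 0 := by positivity
  push_cast [Nat.cast_sub hD]
  field_simp
  ring

end LayerScale

theorem sharpness_at_sgd_minimum (D : ℕ) (hD : 3 ≤ D) (d : ℕ → ℕ) (dd : ℕ)
    (hd0 : 0 < d 0) (hdD : 0 < d D)
    (Se : Matrix (Fin (d D)) (Fin (d D)) ℝ) (hSe : Se.PosDef)
    (Sx : Matrix (Fin (d 0)) (Fin (d 0)) ℝ) (hSx : Sx.PosDef)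
    (L : Matrix (Fin (d D)) (Fin dd) ℝ) (R : Matrix (Fin (d 0)) (Fin dd) ℝ)
    (S : Matrix (Fin dd) (Fin dd) ℝ)
    (hSdiag : ∀ i j, i ≠ j → S i j = 0) (hSnonneg : ∀ i, 0 ≤ S i i)
    (hR : Rᵀ * R = 1) (hTrS : 0 < S.trace)
    (U : ∀ i : ℕ, Matrix (Fin (d i)) (Fin dd) ℝ)
    (hU : ∀ i, 1 ≤ i → i ≤ D - 1 → (U i)ᵀ * U i = 1)
    (W : ∀ k, Matrix (Fin (d (k + 1))) (Fin (d k)) ℝ)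
    (hW0 : W 0 =
      U 1 * ((S.trace ^ (-((D : ℝ) - 2) / (2 * D)) * Sx.trace ^ (((D : ℝ) - 1) / (2 * D))
          * Se.trace ^ (-(1 : ℝ) / (2 * D))) • entrywiseSqrt S)
        * Rᵀ * (Matrix.PosSemidef.sqrt hSx.posSemidef)⁻¹)
    (hWmid : ∀ i, 1 ≤ i → i ≤ D - 2 →
      W i = (S.trace ^ ((1 : ℝ) / D) * (Se.trace * Sx.trace) ^ (-(1 : ℝ) / (2 * D))) •
        (U (i + 1) * (U i)ᵀ))
    (hWD : W (D - 1) =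
      ((Matrix.PosSemidef.sqrt hSe.posSemidef)⁻¹ * L *
        ((S.trace ^ (-((D : ℝ) - 2) / (2 * D)) * Se.trace ^ (((D : ℝ) - 1) / (2 * D))
          * Sx.trace ^ (-(1 : ℝ) / (2 * D))) • entrywiseSqrt S)
        * (U (D - 1))ᵀ).submatrix
          (Fin.cast (congrArg d (by omega : D - 1 + 1 = D))) id) :
    sharpnessT d W Sx D =
      ((D : ℝ) - 1) * S.trace ^ (((D : ℝ) - 2) / D)
          * (Se.trace * Sx.trace) ^ ((1 : ℝ) / D) * (Se⁻¹ * (L * S * Lᵀ)).trace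
        + (d D : ℝ) * S.trace ^ (2 * ((D : ℝ) - 1) / D) * Sx.trace ^ ((1 : ℝ) / D)
          / Se.trace ^ (((D : ℝ) - 1) / D) := by
  have hTrSx : 0 < Sx.trace := haveI := Fin.pos_iff_nonempty.mp hd0; hSx.trace_pos
  have hTrSe : 0 < Se.trace := haveI := Fin.pos_iff_nonempty.mp hdD; hSe.trace_pos
  set P := entrywiseSqrt S
  have hP : P * Pᵀ = S := entrywiseSqrt_mul_transpose_self (fun i j h => hSdiag i j h) hSnonneg
  set α := outerLayerScale D S.trace Sx.trace Se.trace
  set β := outerLayerScale D S.trace Se.trace Sx.trace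
  set γ := innerLayerScale D S.trace Se.trace Sx.trace
  set N := hSe.posSemidef.sqrt⁻¹ * L * (β • P)
  have hW0' : W 0 = α • (U 1 * (P * Rᵀ * hSx.posSemidef.sqrt⁻¹)) := by
    rw [hW0]; simp only [Matrix.smul_mul, Matrix.mul_smul, Matrix.mul_assoc]; rfl
  have hTop : ∀ j, j + 1 = D → (W j)ᵀ * W j = U j * (Nᵀ * N) * (U j)ᵀ := by
    intro j hj
    obtain rfl : j = D - 1 := by omega
    rw [hWD, transpose_submatrix_cast_mul_self]
    change (N * (U (D - 1))ᵀ)ᵀ * (N * (U (D - 1))ᵀ) = _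
    simp only [transpose_mul, transpose_transpose, Matrix.mul_assoc]
  have hM : (P * Rᵀ * hSx.posSemidef.sqrt⁻¹ * Sx * (P * Rᵀ * hSx.posSemidef.sqrt⁻¹)ᵀ).trace
      = S.trace := by
    rw [hSx.mul_inv_sqrt_mul_self_mul_transpose, transpose_mul, transpose_transpose,
      Matrix.mul_assoc, ← Matrix.mul_assoc Rᵀ, hR, Matrix.one_mul, hP]
  rw [sharpnessT_eq_of_aligned (γ := γ) (by omega) Sx hW0' (fun j h1 _ => hWmid j h1 (by omega))
    hTop (fun j h1 _ => hU j h1 (by omega)), hM,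
    hSe.posSemidef.trace_transpose_mul_self_inv_sqrt_mul_mul_smul L hP β]
  have hK₁ := sq_layerScales_middle hD hTrS hTrSx hTrSe
  have hK₂ := sq_layerScales_first (D := D) (by omega) hTrS hTrSx hTrSe
  have hK₃ := sq_layerScales_last (D := D) (by omega) hTrS hTrSx hTrSe
  rw [Nat.cast_sub (by omega)]
  linear_combination (((D : ℝ) - 2) * hK₁ + hK₂) * (Se⁻¹ * (L * S * Lᵀ)).trace + (d D : ℝ) * hK₃
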